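/- Let N be a normal subgroup of G, c : G → Der a 1-cocycle (c_{gh} = c_g + g·c_h), and D : G/N → Der_k(k[[y_N]]) the 1-cocycle determined by D_ḡ(y_N) = ρ(g)(y_N)·(y_N'/(ρ(g)(y_N))')·Σ_{s∈N} c_{gs}(f_{gs})/f_{gs} − y_N·Σ_{s∈N} c_s(f_s)/f_s. Then there exists α ∈ k((t)) with ord(α) ≥ ord(y_G') − ord(y_N') such that for every g ∈ G: ρ(g)(α) − α = c_g(y_G) − D_{gN}(y_G), where D_{gN}(y_G) denotes the value of the derivation D_{gN} of k[[y_N]] at the element y_G ∈ k[[y_N]]. Consequently the two 1-cocycles g ↦ c_g(y_G) and g ↦ D_{gN}(y_G) on G, with values in the G-stable ideal (y_G'/y_N')·k[[t]] (G acting via ρ), define the same cohomology class. -/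

import Mathlib

open PowerSeries

/-- the canonical embedding `k[[t]] → k((t))`. -/
noncomputable def toL {k : Type} [Field k] (x : PowerSeries k) : LaurentSeries k :=
  HahnSeries.ofPowerSeries ℤ k x

/-- `ord(x) ≥ n` for the `t`-adic valuation on `k((t))` (with `ord 0 = ∞`). -/
def ordGE {k : Type} [Field k] (x : LaurentSeries k) (n : ℤ) : Prop :=
  x = 0 ∨ n ≤ HahnSeries.order x

/-!
Over a perfect field of characteristic `p`, `k⟦X⟧` is spanned over its `p`-th powers by
`1, X, …, X ^ (p - 1)`, so every `k`-derivation is `f ↦ f' • D X`; in particular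
`c_g(y_G) = y_G' · c_g(X)`, and the chain rule `(σ f)' = σ(f') · (σ X)'` holds for every
automorphism `σ`. Dividing the cocycle identity `c_{gs}(f_{gs}) = f_{gs}' · c_g(X) + ρ(g)(c_s(f_s))`
by `f_{gs}` and summing over `s ∈ N` gives
`Σ c_{gs}(f_{gs}) / f_{gs} = (ρ(g) y_N)' / ρ(g) y_N · c_g(X) + ρ(g)(S)` with
`S = Σ c_s(f_s) / f_s`. Substituting this into `D_{gN}(y_G)` and using the chain rule together
with `ρ(g) y_G = y_G` yields `c_g(y_G) - D_{gN}(y_G) = ρ(g)(α) - α` for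
`α = -y_G' · y_N · S / y_N'`. As `ord y_N ≥ 1`, `ord S ≥ -1` and automorphisms preserve `ord`,
both cocycles and `α` lie in the ideal of order `≥ ord y_G' - ord y_N'`.
-/

namespace PowerSeries

theorem eq_sum_expand_mul_X_pow {R : Type*} [CommRing R] (p : ℕ) (hp : p ≠ 0) (f : R⟦X⟧) :
    f = ∑ i ∈ Finset.range p, expand p hp (mk fun j ↦ coeff (p * j + i) f) * X ^ i := by
  ext n
  have hdiv := Nat.div_add_mod n p
  rw [map_sum, Finset.sum_eq_single (n % p)]
  · rw [coeff_mul_X_pow', if_pos (Nat.mod_le n p), coeff_expand, if_pos (Nat.dvd_sub_mod n),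
      coeff_mk, show n - n % p = p * (n / p) by omega,
      Nat.mul_div_cancel_left _ (Nat.pos_of_ne_zero hp), hdiv]
  · intro i hi hne
    rw [coeff_mul_X_pow']
    split_ifs
    · rw [coeff_expand_of_not_dvd]
      rintro ⟨m, hm⟩
      have hip := Finset.mem_range.mp hi
      exact hne (by rw [show n = i + p * m by omega, Nat.add_mul_mod_self_left,
        Nat.mod_eq_of_lt hip])
    · rfl
  · exact fun h ↦ absurd (Finset.mem_range.2 (Nat.mod_lt n (Nat.pos_of_ne_zero hp))) h

variable {k : Type*} [Field k]

theorem expand_eq_pow_map_frobeniusEquiv_symm (p : ℕ) [Fact p.Prime] [CharP k p]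
    [PerfectField k] (f : k⟦X⟧) :
    expand p (NeZero.ne p) f = (f.map (frobeniusEquiv k p).symm.toRingHom) ^ p := by
  rw [← MvPowerSeries.map_frobenius_expand p (NeZero.ne p)]
  change _ = map _ (expand p _ _)
  rw [← map_expand]
  ext n
  rw [coeff_map, coeff_map, RingEquiv.toRingHom_eq_coe, RingHom.coe_coe,
    frobenius_apply_frobeniusEquiv_symm]

theorem exists_eq_sum_pow_mul_X_pow (p : ℕ) [Fact p.Prime] [CharP k p] [PerfectField k]
    (f : k⟦X⟧) :
    ∃ b : ℕ → k⟦X⟧, f = ∑ i ∈ Finset.range p, b i ^ p * X ^ i := by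
  refine ⟨fun i ↦ (mk fun j ↦ coeff (p * j + i) f).map (frobeniusEquiv k p).symm.toRingHom, ?_⟩
  simp_rw [← expand_eq_pow_map_frobeniusEquiv_symm]
  exact eq_sum_expand_mul_X_pow p _ f

theorem derivation_eq_zero_of_apply_X {M : Type*} [AddCommGroup M] [Module k⟦X⟧ M] [Module k M]
    (p : ℕ) [Fact p.Prime] [CharP k p] [PerfectField k] {D : Derivation k k⟦X⟧ M}
    (hD : D X = 0) : D = 0 := by
  ext f
  obtain ⟨b, rfl⟩ := exists_eq_sum_pow_mul_X_pow p f
  rw [map_sum, Derivation.zero_apply]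
  refine Finset.sum_eq_zero fun i _ ↦ ?_
  rw [Derivation.leibniz, Derivation.leibniz_pow, Derivation.leibniz_pow, hD,
    ← Nat.cast_smul_eq_nsmul k p, CharP.cast_eq_zero, zero_smul]
  simp only [smul_zero, add_zero]

theorem derivation_apply_eq_derivative_smul {M : Type*} [AddCommGroup M] [Module k⟦X⟧ M]
    [Module k M] [IsScalarTower k k⟦X⟧ M] (p : ℕ) [Fact p.Prime] [CharP k p] [PerfectField k]
    (D : Derivation k k⟦X⟧ M) (f : k⟦X⟧) : D f = derivative k f • D X := by
  have := derivation_eq_zero_of_apply_X p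
    (D := D - (LinearMap.toSpanSingleton k⟦X⟧ M (D X)).compDer (derivative k)) (by simp)
  simpa [sub_eq_zero] using congrArg (· f) this

theorem derivative_algEquiv_apply (p : ℕ) [Fact p.Prime] [CharP k p] [PerfectField k]
    (σ : k⟦X⟧ ≃ₐ[k] k⟦X⟧) (f : k⟦X⟧) :
    derivative k (σ f) = σ (derivative k f) * derivative k (σ X) := by
  let D : Derivation k k⟦X⟧ k⟦X⟧ :=
    Derivation.mk' (σ.symm.toLinearMap ∘ₗ (derivative k).toLinearMap ∘ₗ σ.toLinearMap)
      fun a b ↦ by simp [Derivation.leibniz, smul_eq_mul]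
  have hD : ∀ x, D x = σ.symm (derivative k (σ x)) := fun _ ↦ rfl
  simpa [hD, smul_eq_mul] using congrArg σ (derivation_apply_eq_derivative_smul p D f)

theorem isUnit_derivative_algEquiv_X (p : ℕ) [Fact p.Prime] [CharP k p] [PerfectField k]
    (σ : k⟦X⟧ ≃ₐ[k] k⟦X⟧) : IsUnit (derivative k (σ X)) := by
  have h := derivative_algEquiv_apply p σ (σ.symm X)
  rw [AlgEquiv.apply_symm_apply, derivative_X] at h
  exact IsUnit.of_mul_eq_one_right _ h.symm

theorem order_mulEquiv_apply {F : Type*} [EquivLike F k⟦X⟧ k⟦X⟧] [MulEquivClass F k⟦X⟧ k⟦X⟧]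
    (σ : F) (f : k⟦X⟧) : (σ f).order = f.order := by
  have hX : Associated X (σ X) := IsDiscreteValuationRing.associated_of_irreducible _
    X_irreducible ((MulEquiv.irreducible_iff σ).2 X_irreducible)
  rw [order_eq_emultiplicity_X, order_eq_emultiplicity_X,
    ← emultiplicity_eq_of_associated_left hX, emultiplicity_map_eq]

end PowerSeries

section Laurent

variable {k : Type} [Field k]

theorem toL_add (x y : k⟦X⟧) : toL (x + y) = toL x + toL y := map_add _ x y

theorem toL_mul (x y : k⟦X⟧) : toL (x * y) = toL x * toL y := map_mul _ x y

theorem toL_eq_zero_iff {x : k⟦X⟧} : toL x = 0 ↔ x = 0 :=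
  map_eq_zero_iff _ HahnSeries.ofPowerSeries_injective

theorem toL_ne_zero {x : k⟦X⟧} (hx : x ≠ 0) : toL x ≠ 0 := toL_eq_zero_iff.not.2 hx

theorem order_toL (f : k⟦X⟧) : (toL f).order = f.order.toNat := by
  rcases eq_or_ne f 0 with rfl | hf
  · simp [toL]
  apply le_antisymm
  · apply HahnSeries.order_le_of_coeff_ne_zero
    rw [toL, HahnSeries.ofPowerSeries_apply_coeff]
    exact coeff_order hf
  · rw [HahnSeries.le_order_iff_forall (toL_ne_zero hf)]
    intro j hj
    rw [toL, coeff_coe]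
    split_ifs with hneg
    · rfl
    · exact coeff_of_lt_order_toNat _ (by omega)

theorem LaurentSeries.order_inv (x : LaurentSeries k) : x⁻¹.order = -x.order := by
  rcases eq_or_ne x 0 with rfl | hx
  · simp
  have h := HahnSeries.order_mul (inv_ne_zero hx) hx
  rw [inv_mul_cancel₀ hx, HahnSeries.order_one] at h
  omega

theorem order_toL_div_toL {a b : k⟦X⟧} (ha : a ≠ 0) (hb : b ≠ 0) :
    (toL a / toL b).order = a.order.toNat - b.order.toNat := by
  rw [div_eq_mul_inv, HahnSeries.order_mul (toL_ne_zero ha)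
    (inv_ne_zero (toL_ne_zero hb)), LaurentSeries.order_inv, order_toL, order_toL]
  ring

theorem ordGE_iff {x : LaurentSeries k} {n : ℤ} : ordGE x n ↔ (n : WithTop ℤ) ≤ x.orderTop := by
  rcases eq_or_ne x 0 with rfl | hx
  · simp [ordGE]
  rw [ordGE, ← HahnSeries.order_eq_orderTop_of_ne_zero hx, WithTop.coe_le_coe]
  simp [hx]

theorem ordGE.mono {x : LaurentSeries k} {n m : ℤ} (h : ordGE x n) (hm : m ≤ n) : ordGE x m :=
  ordGE_iff.2 ((WithTop.coe_le_coe.2 hm).trans (ordGE_iff.1 h))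

theorem ordGE.neg {x : LaurentSeries k} {n : ℤ} (h : ordGE x n) : ordGE (-x) n := by
  rwa [ordGE_iff, HahnSeries.orderTop_neg, ← ordGE_iff]

theorem ordGE.add {x y : LaurentSeries k} {n : ℤ} (hx : ordGE x n) (hy : ordGE y n) :
    ordGE (x + y) n :=
  ordGE_iff.2 ((le_min (ordGE_iff.1 hx) (ordGE_iff.1 hy)).trans
    HahnSeries.min_orderTop_le_orderTop_add)

theorem ordGE.sub {x y : LaurentSeries k} {n : ℤ} (hx : ordGE x n) (hy : ordGE y n) :
    ordGE (x - y) n := by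
  simpa only [sub_eq_add_neg] using hx.add hy.neg

theorem ordGE.mul {x y : LaurentSeries k} {a b : ℤ} (hx : ordGE x a) (hy : ordGE y b) :
    ordGE (x * y) (a + b) := by
  rw [ordGE_iff, HahnSeries.orderTop_mul, WithTop.coe_add]
  exact add_le_add (ordGE_iff.1 hx) (ordGE_iff.1 hy)

theorem ordGE_sum {ι : Type*} {s : Finset ι} {f : ι → LaurentSeries k} {n : ℤ}
    (h : ∀ i ∈ s, ordGE (f i) n) : ordGE (∑ i ∈ s, f i) n :=
  Finset.sum_induction f (ordGE · n) (fun _ _ ↦ ordGE.add) (Or.inl rfl) h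

theorem ordGE_toL {f : k⟦X⟧} {d : ℕ} (h : (d : ℕ∞) ≤ f.order) : ordGE (toL f) d := by
  rcases eq_or_ne f 0 with rfl | hf
  · exact Or.inl (map_zero _)
  refine Or.inr ?_
  rw [order_toL, Nat.cast_le]
  rwa [← ENat.natCast_toNat (order_eq_top.not.2 hf), Nat.cast_le] at h

theorem ordGE_toL_zero (f : k⟦X⟧) : ordGE (toL f) 0 :=
  ordGE_toL (d := 0) (by simp)

theorem ordGE_inv_toL {f : k⟦X⟧} {d : ℕ} (h : f.order = d) : ordGE (toL f)⁻¹ (-d) :=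
  Or.inr (by rw [LaurentSeries.order_inv, order_toL, h, ENat.toNat_natCast])

theorem ordGE_map_iff {E F : Type*} [EquivLike E k⟦X⟧ k⟦X⟧] [MulEquivClass E k⟦X⟧ k⟦X⟧]
    [FunLike F (LaurentSeries k) (LaurentSeries k)]
    [RingHomClass F (LaurentSeries k) (LaurentSeries k)] (σ : E) (σL : F)
    (hσL : ∀ x, σL (toL x) = toL (σ x)) {x : LaurentSeries k} {n : ℤ} :
    ordGE (σL x) n ↔ ordGE x n := by
  obtain ⟨a, b, hb, rfl⟩ := IsFractionRing.div_surjective (A := k⟦X⟧) x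
  have hb0 : b ≠ 0 := nonZeroDivisors.ne_zero hb
  have hσb : σ b ≠ 0 := EmbeddingLike.map_ne_zero_iff.2 hb0
  change ordGE (σL (toL a / toL b)) n ↔ ordGE (toL a / toL b) n
  rw [map_div₀, hσL, hσL]
  rcases eq_or_ne a 0 with rfl | ha0
  · simp [ordGE, toL]
  have hσa : σ a ≠ 0 := EmbeddingLike.map_ne_zero_iff.2 ha0
  simp only [ordGE, div_eq_zero_iff, toL_eq_zero_iff, ha0, hb0, hσa, hσb, or_self, false_or,
    order_toL_div_toL ha0 hb0, order_toL_div_toL hσa hσb, order_mulEquiv_apply]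

noncomputable def dlog (D : Derivation k k⟦X⟧ k⟦X⟧) (f : k⟦X⟧) : LaurentSeries k :=
  toL (D f) * (toL f)⁻¹

theorem dlog_mul (D : Derivation k k⟦X⟧ k⟦X⟧) {f g : k⟦X⟧} (hf : f ≠ 0) (hg : g ≠ 0) :
    dlog D (f * g) = dlog D f + dlog D g := by
  have hf' : toL f ≠ 0 := toL_ne_zero hf
  have hg' : toL g ≠ 0 := toL_ne_zero hg
  simp only [dlog, Derivation.leibniz, smul_eq_mul, toL_add, toL_mul]
  field_simp
  ring

theorem dlog_prod {ι : Type*} (D : Derivation k k⟦X⟧ k⟦X⟧) (s : Finset ι) {f : ι → k⟦X⟧}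
    (hf : ∀ i ∈ s, f i ≠ 0) : dlog D (∏ i ∈ s, f i) = ∑ i ∈ s, dlog D (f i) := by
  induction s using Finset.cons_induction with
  | empty => simp [dlog, toL]
  | cons a s ha ih =>
    rw [Finset.prod_cons, Finset.sum_cons, dlog_mul D (hf a (Finset.mem_cons_self a s))
      (Finset.prod_ne_zero_iff.2 fun i hi ↦ hf i (Finset.mem_cons_of_mem hi)),
      ih fun i hi ↦ hf i (Finset.mem_cons_of_mem hi)]

theorem ordGE_dlog (D : Derivation k k⟦X⟧ k⟦X⟧) {f : k⟦X⟧} {d : ℕ} (hf : f.order = d) :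
    ordGE (dlog D f) (-d) := by
  simpa [dlog] using (ordGE_toL_zero (D f)).mul (ordGE_inv_toL hf)

theorem ordGE_dlog_algEquiv_X (D : Derivation k k⟦X⟧ k⟦X⟧) (σ : k⟦X⟧ ≃ₐ[k] k⟦X⟧) :
    ordGE (dlog D (σ X)) (-1) := by
  simpa using ordGE_dlog D (d := 1) (by rw [order_mulEquiv_apply, order_X]; rfl)

end Laurent

theorem map_prod_univ_apply {G R A : Type*} [Group G] [Fintype G] [CommSemiring R]
    [CommSemiring A] [Algebra R A] (ρ : G →* (A ≃ₐ[R] A)) (x : A) (g : G) :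
    ρ g (∏ h, ρ h x) = ∏ h, ρ h x := by
  rw [map_prod]
  exact Fintype.prod_equiv (Equiv.mulLeft g) _ _ fun h ↦ by simp [AlgEquiv.mul_apply]

section Cocycle

variable {k : Type} [Field k] [PerfectField k] {G : Type} [Group G]

theorem derivative_algEquiv_apply_ne_zero (p : ℕ) [Fact p.Prime] [CharP k p]
    (σ : k⟦X⟧ ≃ₐ[k] k⟦X⟧) {f : k⟦X⟧} (hf : derivative k f ≠ 0) :
    derivative k (σ f) ≠ 0 := by
  rw [derivative_algEquiv_apply p]
  exact mul_ne_zero (EmbeddingLike.map_ne_zero_iff.2 hf)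
    (isUnit_derivative_algEquiv_X p σ).ne_zero

theorem map_derivative_mul_div_derivative (p : ℕ) [Fact p.Prime] [CharP k p]
    (σ : k⟦X⟧ ≃ₐ[k] k⟦X⟧) {F : Type*} [FunLike F (LaurentSeries k) (LaurentSeries k)]
    [RingHomClass F (LaurentSeries k) (LaurentSeries k)] (σL : F)
    (hσL : ∀ x, σL (toL x) = toL (σ x)) {f : k⟦X⟧} (hf : σ f = f) (y : k⟦X⟧) :
    σL (toL (derivative k f) * toL y * (toL (derivative k y))⁻¹) =
      toL (derivative k f) * toL (σ y) * (toL (derivative k (σ y)))⁻¹ := by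
  have he : toL (derivative k (σ X)) ≠ 0 :=
    toL_ne_zero (isUnit_derivative_algEquiv_X p σ).ne_zero
  have hdf : toL (derivative k f) = toL (σ (derivative k f)) * toL (derivative k (σ X)) := by
    rw [← toL_mul, ← derivative_algEquiv_apply p, hf]
  conv_rhs => rw [hdf, derivative_algEquiv_apply p σ y, toL_mul]
  rw [map_mul, map_mul, map_inv₀, hσL, hσL, hσL]
  field_simp

theorem dlog_cocycle_mul (p : ℕ) [Fact p.Prime] [CharP k p]
    {ρ : G →* (k⟦X⟧ ≃ₐ[k] k⟦X⟧)} {ρL : G →* (LaurentSeries k ≃ₐ[k] LaurentSeries k)}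
    (hρL : ∀ g x, ρL g (toL x) = toL (ρ g x)) {c : G → Derivation k k⟦X⟧ k⟦X⟧}
    (hc : ∀ g h : G, ∀ x, c (g * h) x = c g x + ρ g (c h (ρ g⁻¹ x))) (g h : G) :
    dlog (c (g * h)) (ρ (g * h) X) =
      dlog (derivative k) (ρ (g * h) X) * toL (c g X) + ρL g (dlog (c h) (ρ h X)) := by
  have hinv : ρ g⁻¹ (ρ (g * h) X) = ρ h X := by
    rw [← AlgEquiv.mul_apply, ← map_mul, inv_mul_cancel_left]
  have hmul : ρ g (ρ h X) = ρ (g * h) X := by rw [map_mul, AlgEquiv.mul_apply]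
  rw [dlog, dlog, dlog, hc, hinv, derivation_apply_eq_derivative_smul p (c g), smul_eq_mul,
    toL_add, toL_mul, map_mul (ρL g), map_inv₀, hρL, hρL, hmul]
  ring

theorem sum_dlog_cocycle (p : ℕ) [Fact p.Prime] [CharP k p]
    {ρ : G →* (k⟦X⟧ ≃ₐ[k] k⟦X⟧)} {ρL : G →* (LaurentSeries k ≃ₐ[k] LaurentSeries k)}
    (hρL : ∀ g x, ρL g (toL x) = toL (ρ g x)) {c : G → Derivation k k⟦X⟧ k⟦X⟧}
    (hc : ∀ g h : G, ∀ x, c (g * h) x = c g x + ρ g (c h (ρ g⁻¹ x))) (s : Finset G) (g : G) :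
    ∑ h ∈ s, dlog (c (g * h)) (ρ (g * h) X) =
      dlog (derivative k) (ρ g (∏ h ∈ s, ρ h X)) * toL (c g X) +
        ρL g (∑ h ∈ s, dlog (c h) (ρ h X)) := by
  have hprod : ρ g (∏ h ∈ s, ρ h X) = ∏ h ∈ s, ρ (g * h) X := by
    simp [map_prod, AlgEquiv.mul_apply]
  rw [hprod, dlog_prod _ _ fun h _ ↦ EmbeddingLike.map_ne_zero_iff.2 X_ne_zero, Finset.sum_mul,
    map_sum, ← Finset.sum_add_distrib]
  exact Finset.sum_congr rfl fun h _ ↦ dlog_cocycle_mul p hρL hc g h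

end Cocycle

theorem statement14_general
    (p : ℕ) [Fact p.Prime]
    (k : Type) [Field k] [CharP k p] [PerfectField k]
    (G : Type) [Group G] [Fintype G]
    (ρ : G →* (PowerSeries k ≃ₐ[k] PowerSeries k))
    (ρL : G →* (LaurentSeries k ≃ₐ[k] LaurentSeries k))
    (hρL : ∀ g x, ρL g (toL x) = toL (ρ g x))
    (N : Subgroup G) [DecidablePred (· ∈ N)]
    (yN yG : PowerSeries k)
    (hyN : yN = ∏ s ∈ Finset.univ.filter (· ∈ N), ρ s PowerSeries.X)
    (hyG : yG = ∏ g : G, ρ g PowerSeries.X)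
    (dG dN : ℕ)
    (hdG : (PowerSeries.derivative k yG).order = (dG : ℕ∞))
    (hdN : (PowerSeries.derivative k yN).order = (dN : ℕ∞))
    (c : G → Derivation k (PowerSeries k) (PowerSeries k))
    (hc : ∀ g h : G, ∀ x, c (g * h) x = c g x + ρ g (c h (ρ g⁻¹ x)))
    -- `DyG g = D_{gN}(y_G)`, expressed via the chain rule through `y_N`
    (DyG : G → LaurentSeries k)
    (hDyG : ∀ g : G, DyG g =
      toL (PowerSeries.derivative k yG) * (toL (PowerSeries.derivative k yN))⁻¹ *
        (toL (ρ g yN) *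
          (toL (PowerSeries.derivative k yN) *
            (toL (PowerSeries.derivative k (ρ g yN)))⁻¹) *
          (∑ s ∈ Finset.univ.filter (· ∈ N),
            toL (c (g * s) (ρ (g * s) PowerSeries.X)) * (toL (ρ (g * s) PowerSeries.X))⁻¹) -
        toL yN *
          ∑ s ∈ Finset.univ.filter (· ∈ N),
            toL (c s (ρ s PowerSeries.X)) * (toL (ρ s PowerSeries.X))⁻¹)) :
    -- the two cocycles take values in the ideal `(y_G'/y_N')·k[[t]]` …
    (∀ g : G, ordGE (toL (c g yG)) ((dG : ℤ) - (dN : ℤ)) ∧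
      ordGE (DyG g) ((dG : ℤ) - (dN : ℤ))) ∧
    -- … and differ by the coboundary of an element `α` of this ideal
    (∃ α : LaurentSeries k, ordGE α ((dG : ℤ) - (dN : ℤ)) ∧
      ∀ g : G, ρL g α - α = toL (c g yG) - DyG g) := by
  classical
  set S := ∑ s ∈ Finset.univ.filter (· ∈ N), toL (c s (ρ s X)) * (toL (ρ s X))⁻¹ with hS
  set α := -(toL (derivative k yG) * toL yN * (toL (derivative k yN))⁻¹ * S) with hα
  have hdyN : derivative k yN ≠ 0 := fun h ↦ by simp [h] at hdN
  have hyN0 : yN ≠ 0 := by rintro rfl; simp at hdyN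
  have hcyG (g : G) : toL (c g yG) = toL (derivative k yG) * toL (c g X) := by
    rw [derivation_apply_eq_derivative_smul p, smul_eq_mul, toL_mul]
  have hcob (g : G) : ρL g α - α = toL (c g yG) - DyG g := by
    have hsum := sum_dlog_cocycle p hρL hc (Finset.univ.filter (· ∈ N)) g
    simp only [dlog, ← hyN, ← hS] at hsum
    have hρyN : toL (ρ g yN) ≠ 0 := toL_ne_zero (EmbeddingLike.map_ne_zero_iff.2 hyN0)
    have hρyN' : toL (derivative k (ρ g yN)) ≠ 0 :=
      toL_ne_zero (derivative_algEquiv_apply_ne_zero p (ρ g) hdyN)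
    have hyN' : toL (derivative k yN) ≠ 0 := toL_ne_zero hdyN
    rw [hDyG, hsum, hα, map_neg, map_mul, hcyG, map_derivative_mul_div_derivative p (ρ g) (ρL g)
      (hρL g) (by rw [hyG, map_prod_univ_apply])]
    field_simp
    ring
  have hα_ord : ordGE α (dG - dN) := by
    have hS_ord : ordGE S (-1) := ordGE_sum fun s _ ↦ ordGE_dlog_algEquiv_X (c s) (ρ s)
    have hyN1 : ordGE (toL yN) 1 := ordGE_toL <| by
      rw [Nat.cast_one, one_le_order_iff_constCoeff_eq_zero, hyN, map_prod]
      exact Finset.prod_eq_zero (i := 1) (by simp [N.one_mem]) (by simp)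
    exact ((((ordGE_toL hdG.ge).mul hyN1).mul (ordGE_inv_toL hdN)).mul hS_ord).neg.mono (by omega)
  have hcyG_ord (g : G) : ordGE (toL (c g yG)) (dG - dN) := by
    rw [hcyG]
    exact ((ordGE_toL hdG.ge).mul (ordGE_toL_zero _)).mono (by omega)
  refine ⟨fun g ↦ ⟨hcyG_ord g, ?_⟩, α, hα_ord, hcob⟩
  rw [show DyG g = toL (c g yG) - (ρL g α - α) by rw [hcob]; ring]
  exact (hcyG_ord g).sub (((ordGE_map_iff (ρ g) (ρL g) (hρL g)).2 hα_ord).sub hα_ord)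

/-- Let `c : G → Der` be a `1`-cocycle and `D` the `1`-cocycle of
`G/N` with values in `Der_k(k[[y_N]])` determined by `D_ḡ(y_N) =
ρ(g)(y_N)·(y_N'/(ρ(g)(y_N))')·Σ_{s∈N} c_{gs}(f_{gs})/f_{gs} − y_N·Σ_{s∈N} c_s(f_s)/f_s`.
Then there is `α ∈ k((t))` with `ord(α) ≥ ord(y_G') − ord(y_N')` such that
`ρ(g)(α) − α = c_g(y_G) − D_{gN}(y_G)` for all `g ∈ G`; consequently the two
`1`-cocycles `g ↦ c_g(y_G)` and `g ↦ D_{gN}(y_G)` with values in the ideal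
`(y_G'/y_N')·k[[t]]` define the same cohomology class.
(Here `D_{gN}(y_G) = (y_G'/y_N')·D_{gN}(y_N)` by the chain rule.) -/
theorem statement14
    (p : ℕ) [Fact p.Prime]
    (k : Type) [Field k] [CharP k p] [PerfectField k]
    (G : Type) [Group G] [Fintype G]
    (ρ : G →* (PowerSeries k ≃ₐ[k] PowerSeries k)) (hρ : Function.Injective ρ)
    (ρL : G →* (LaurentSeries k ≃ₐ[k] LaurentSeries k))
    (hρL : ∀ g x, ρL g (toL x) = toL (ρ g x))
    (N : Subgroup G) (hN : N.Normal) [DecidablePred (· ∈ N)]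
    (yN yG : PowerSeries k)
    (hyN : yN = ∏ s ∈ Finset.univ.filter (· ∈ N), ρ s PowerSeries.X)
    (hyG : yG = ∏ g : G, ρ g PowerSeries.X)
    (dG dN : ℕ)
    (hdG : (PowerSeries.derivative k yG).order = (dG : ℕ∞))
    (hdN : (PowerSeries.derivative k yN).order = (dN : ℕ∞))
    (c : G → Derivation k (PowerSeries k) (PowerSeries k))
    (hc : ∀ g h : G, ∀ x, c (g * h) x = c g x + ρ g (c h (ρ g⁻¹ x)))
    -- `DyG g = D_{gN}(y_G)`, expressed via the chain rule through `y_N`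
    (DyG : G → LaurentSeries k)
    (hDyG : ∀ g : G, DyG g =
      toL (PowerSeries.derivative k yG) * (toL (PowerSeries.derivative k yN))⁻¹ *
        (toL (ρ g yN) *
          (toL (PowerSeries.derivative k yN) *
            (toL (PowerSeries.derivative k (ρ g yN)))⁻¹) *
          (∑ s ∈ Finset.univ.filter (· ∈ N),
            toL (c (g * s) (ρ (g * s) PowerSeries.X)) * (toL (ρ (g * s) PowerSeries.X))⁻¹) -
        toL yN *
          ∑ s ∈ Finset.univ.filter (· ∈ N),
            toL (c s (ρ s PowerSeries.X)) * (toL (ρ s PowerSeries.X))⁻¹)) :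
    -- the two cocycles take values in the ideal `(y_G'/y_N')·k[[t]]` …
    (∀ g : G, ordGE (toL (c g yG)) ((dG : ℤ) - (dN : ℤ)) ∧
      ordGE (DyG g) ((dG : ℤ) - (dN : ℤ))) ∧
    -- … and differ by the coboundary of an element `α` of this ideal
    (∃ α : LaurentSeries k, ordGE α ((dG : ℤ) - (dN : ℤ)) ∧
      ∀ g : G, ρL g α - α = toL (c g yG) - DyG g) :=
  statement14_general p k G ρ ρL hρL N yN yG hyN hyG dG dN hdG hdN c hc DyG hDyG
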